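/- The number of totally disconnected subsets D of {1,...,N} with exactly j elements lying in even positions and i elements in odd positions gives, after the substitution w_k = x_{[k+1]}^2 with N = 2n, the coefficient C(n-r, q) C(n-q, r) of x_1^{2q} x_2^{2r} in x_1^n x_2^n s_n; i.e., F(w_1,...,w_{2n})|_{w_{2k-1}=u, w_{2k}=v} = Σ_{q+r≤n} C(n-r,q) C(n-q,r) u^q v^r. -/

import Mathlib

/-!
Keeping or dropping the last site gives `F_{N+2} = F_{N+1} + w_{N+2} F_N`, so with
alternating weights, `E_n = F_{2n}` and `O_n = F_{2n+1}` satisfy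
`E_{n+1} = O_n + v E_n` and `O_{n+1} = E_{n+1} + u O_n`. The coefficients
`C(a-r, q) C(b-q, r)`, with `(a, b) = (n, n)` for `E_n` and `(n+1, n)` for `O_n`, obey the
same two recurrences by Pascal's rule and agree with `E_0 = 1`, `O_0 = 1 + u`.
-/

/-- Fibonacci polynomial: sum over totally disconnected subsets of {1,...,N}. -/
def fibPoly {R : Type*} [CommRing R] (w : ℕ → R) (N : ℕ) : R :=
  ∑ D ∈ (Finset.Icc 1 N).powerset.filter (fun D => ∀ k ∈ D, k + 1 ∉ D), ∏ k ∈ D, w k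

open Finset

abbrev NoConsecutive (D : Finset ℕ) : Prop := ∀ k ∈ D, k + 1 ∉ D

lemma noConsecutive_insert_iff {a : ℕ} {D : Finset ℕ} (h : ∀ k ∈ D, k + 1 < a) :
    NoConsecutive (insert a D) ↔ NoConsecutive D := by
  have ha : a + 1 ∉ D := fun ha1 => by have := h _ ha1; omega
  unfold NoConsecutive
  rw [forall_mem_insert]
  simp only [mem_insert, not_or]
  exact ⟨fun hD k hk => (hD.2 k hk).2,
    fun hD => ⟨⟨by omega, ha⟩, fun k hk => ⟨(h k hk).ne, hD k hk⟩⟩⟩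

lemma not_noConsecutive_insert_insert (a : ℕ) (D : Finset ℕ) :
    ¬ NoConsecutive (insert (a + 1) (insert a D)) :=
  fun hD => hD a (by simp) (by simp)

section
variable {R : Type*} [CommRing R]

lemma fibPoly_eq_sum_powerset (w : ℕ → R) (N : ℕ) :
    fibPoly w N = ∑ D ∈ (Icc 1 N).powerset, if NoConsecutive D then ∏ k ∈ D, w k else 0 :=
  sum_filter _ _

lemma fibPoly_zero (w : ℕ → R) : fibPoly w 0 = 1 := by
  simp [fibPoly_eq_sum_powerset, NoConsecutive]

lemma fibPoly_one (w : ℕ → R) : fibPoly w 1 = 1 + w 1 := by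
  rw [fibPoly_eq_sum_powerset, show Icc 1 1 = insert 1 ∅ by rfl, sum_powerset_insert (by simp)]
  simp [NoConsecutive]

lemma fibPoly_add_two (w : ℕ → R) (N : ℕ) :
    fibPoly w (N + 2) = fibPoly w (N + 1) + w (N + 2) * fibPoly w N := by
  simp only [fibPoly_eq_sum_powerset]
  have hIcc (M : ℕ) : Icc 1 (M + 1) = insert (M + 1) (Icc 1 M) :=
    (insert_Icc_right_eq_Icc_add_one (by omega)).symm
  rw [hIcc (N + 1), sum_powerset_insert (by simp)]
  congr 1
  rw [hIcc N, sum_powerset_insert (by simp)]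
  simp only [if_neg (not_noConsecutive_insert_insert _ _), sum_const_zero, add_zero, mul_sum]
  refine sum_congr rfl fun D hD => ?_
  have hlt : ∀ k ∈ D, k + 1 < N + 2 := fun k hk => by
    have := mem_Icc.1 (mem_powerset.1 hD hk); omega
  have hN : N + 2 ∉ D := fun h => by have := hlt _ h; omega
  simp only [noConsecutive_insert_iff hlt, prod_insert hN]
  rw [mul_ite, mul_zero]
end

/-- Counts the sets with `q` odd and `r` even members, no two adjacent, on the alternating path
of `a` odd and `b` even sites (`b ≤ a ≤ b + 1`). -/
def pathCoeff (a b q r : ℕ) : ℕ := (a - r).choose q * (b - q).choose r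

lemma pathCoeff_swap (a b q r : ℕ) : pathCoeff a b q r = pathCoeff b a r q :=
  Nat.mul_comm _ _

lemma pathCoeff_zero_right (a b q : ℕ) : pathCoeff a b q 0 = a.choose q := by
  simp [pathCoeff]

lemma pathCoeff_eq_zero {a b q r : ℕ} (ha : a < q + r) (hb : b < q + r) :
    pathCoeff a b q r = 0 := by
  rcases le_or_gt r a with hr | hr
  · simp [pathCoeff, Nat.choose_eq_zero_of_lt (by omega : a - r < q)]
  · simp [pathCoeff, Nat.choose_eq_zero_of_lt (by omega : b - q < r)]

lemma pathCoeff_succ_succ {a b : ℕ} (hab : a ≤ b) (q r : ℕ) :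
    pathCoeff (a + 1) (b + 1) q (r + 1) = pathCoeff (a + 1) b q (r + 1) + pathCoeff a b q r := by
  simp only [pathCoeff, Nat.add_sub_add_right]
  rcases le_or_gt q b with hq | hq
  · rw [Nat.sub_add_comm hq, Nat.choose_succ_succ', mul_add, add_comm]
  · simp [Nat.choose_eq_zero_of_lt (by omega : a - r < q)]

section
variable {R : Type*} [CommRing R] (u v : R)

def coeffSum (c : ℕ → ℕ → ℕ) (I J : ℕ) : R :=
  ∑ q ∈ range I, ∑ r ∈ range J, c q r • (u ^ q * v ^ r)

lemma coeffSum_swap (c : ℕ → ℕ → ℕ) (I J : ℕ) :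
    coeffSum u v c I J = coeffSum v u (fun r q => c q r) J I := by
  rw [coeffSum, coeffSum, sum_comm]
  simp only [mul_comm]

lemma coeffSum_succ_right {c d e : ℕ → ℕ → ℕ} (h0 : ∀ q, c q 0 = d q 0)
    (hs : ∀ q r, c q (r + 1) = d q (r + 1) + e q r) (I J : ℕ) :
    coeffSum u v c I (J + 1) = coeffSum u v d I (J + 1) + v * coeffSum u v e I J := by
  simp only [coeffSum, mul_sum, ← sum_add_distrib]
  refine sum_congr rfl fun q _ => ?_
  rw [sum_range_succ', sum_range_succ' (fun r => d q r • _)]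
  simp only [h0, hs, add_smul, sum_add_distrib]
  rw [add_right_comm]
  congr 1
  refine sum_congr rfl fun r _ => ?_
  rw [mul_smul_comm]
  ring

lemma coeffSum_succ_left {c d e : ℕ → ℕ → ℕ} (h0 : ∀ r, c 0 r = d 0 r)
    (hs : ∀ q r, c (q + 1) r = d (q + 1) r + e q r) (I J : ℕ) :
    coeffSum u v c (I + 1) J = coeffSum u v d (I + 1) J + u * coeffSum u v e I J := by
  simp only [coeffSum_swap u v _ _ J]
  exact coeffSum_succ_right v u h0 (fun r q => hs q r) J I

lemma coeffSum_eq_sum_triangle {c : ℕ → ℕ → ℕ} {K I J : ℕ}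
    (hc : ∀ q r, K < q + r → c q r = 0) (hI : K < I) (hJ : K < J) :
    coeffSum u v c I J =
      ∑ q ∈ range (K + 1), ∑ r ∈ range (K + 1 - q), c q r • (u ^ q * v ^ r) := by
  symm
  rw [coeffSum, ← sum_subset (range_subset_range.2 hI)]
  · refine sum_congr rfl fun q hq => sum_subset (range_subset_range.2 (by omega)) ?_
    intro r _ hr
    rw [hc q r (by simp at hq hr; omega), zero_smul]
  · intro q _ hq
    refine sum_eq_zero fun r _ => ?_
    rw [hc q r (by simp at hq; omega), zero_smul]

/-- Stated for every box containing the support, so that the induction may shrink one side. -/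
lemma fibPoly_alternating_eq_coeffSum (n : ℕ) :
    (∀ I J, n < I → n < J →
      fibPoly (fun k => if k % 2 = 1 then u else v) (2 * n) =
        coeffSum u v (pathCoeff n n) I J) ∧
    (∀ I J, n + 1 < I → n + 1 < J →
      fibPoly (fun k => if k % 2 = 1 then u else v) (2 * n + 1) =
        coeffSum u v (pathCoeff (n + 1) n) I J) := by
  induction n with
  | zero =>
    refine ⟨fun I J hI hJ => ?_, fun I J hI hJ => ?_⟩
    · rw [coeffSum_eq_sum_triangle u v (fun q r h => pathCoeff_eq_zero h h) hI hJ]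
      simp [fibPoly_zero, pathCoeff]
    · rw [coeffSum_eq_sum_triangle u v (fun q r h => pathCoeff_eq_zero h (by omega)) hI hJ]
      simp [fibPoly_one, pathCoeff, sum_range_succ]
  | succ n ih =>
    have hv : (if (2 * n + 2) % 2 = 1 then u else v) = v := if_neg (by omega)
    have hu : (if (2 * n + 1 + 2) % 2 = 1 then u else v) = u := if_pos (by omega)
    have heven : ∀ I J, n + 1 < I → n + 1 < J →
        fibPoly (fun k => if k % 2 = 1 then u else v) (2 * n + 2) =
          coeffSum u v (pathCoeff (n + 1) (n + 1)) I J := by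
      intro I J hI hJ
      obtain ⟨J, rfl⟩ : ∃ J', J = J' + 1 := ⟨J - 1, by omega⟩
      rw [fibPoly_add_two, hv, ih.2 I (J + 1) hI hJ, ih.1 I J (by omega) (by omega),
        coeffSum_succ_right u v (fun q => by simp only [pathCoeff_zero_right])
          (pathCoeff_succ_succ le_rfl)]
    refine ⟨heven, fun I J hI hJ => ?_⟩
    obtain ⟨I, rfl⟩ : ∃ I', I = I' + 1 := ⟨I - 1, by omega⟩
    show fibPoly _ (2 * n + 1 + 2) = _
    rw [fibPoly_add_two, hu, heven (I + 1) J (by omega) (by omega), ih.2 I J (by omega) (by omega)]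
    exact (coeffSum_succ_left u v
      (fun r => by simp only [pathCoeff_swap _ _ 0, pathCoeff_zero_right])
      (fun q r => by simp only [pathCoeff_swap _ _ _ r]; exact pathCoeff_succ_succ (by omega) r q)
      I J).symm

end

theorem fibPoly_even_specialization {R : Type*} [CommRing R] (u v : R) (n : ℕ) :
    fibPoly (fun k => if k % 2 = 1 then u else v) (2 * n) =
      ∑ q ∈ Finset.range (n + 1), ∑ r ∈ Finset.range (n + 1 - q),
        ((n - r).choose q * (n - q).choose r : ℕ) • (u ^ q * v ^ r) := by
  rw [(fibPoly_alternating_eq_coeffSum u v n).1 (n + 1) (n + 1) (by omega) (by omega),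
    coeffSum_eq_sum_triangle u v (fun q r h => pathCoeff_eq_zero h h) (by omega) (by omega)]
  rfl
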